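/- arXiv:math/0407030 — 4 statements merged into one kernel-verified Lean document; each statement's English description precedes it below -/
import Mathlib

section
/- Let R be a commutative ring, n ≥ 1, and let θ be the Euler operator on the polynomial ring R[x_1,…,x_n], i.e. θ(f) = Σ_{i=1}^n x_i·∂_i f. Then for every N ∈ ℕ and every polynomial f ∈ R[x_1,…,x_n], one has Σ_{|α| = N} (N!/α!) · x^α · ∂^α f = θ(θ−1)(θ−2)⋯(θ−N+1) f, where the right-hand side is the composition of the operators f ↦ θf − j·f for j = 0, 1, …, N−1 applied to f. -/
open MvPolynomial

/-- The iterated partial derivative `∂^α = ∂_1^{α_1} ⋯ ∂_n^{α_n}` on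
`R[x_1,…,x_n]` (the formal partial derivatives commute, so the order of the
factors is irrelevant). -/
noncomputable def partialDerivPow {R : Type*} [CommRing R] {n : ℕ} (α : Fin n → ℕ)
    (f : MvPolynomial (Fin n) R) : MvPolynomial (Fin n) R :=
  (List.finRange n).foldl (fun g i => (fun h => pderiv i h)^[α i] g) f

/-- The Euler operator `θ(f) = Σ_i x_i · ∂_i f` on `R[x_1,…,x_n]`. -/
noncomputable def eulerOp {R : Type*} [CommRing R] {n : ℕ}
    (f : MvPolynomial (Fin n) R) : MvPolynomial (Fin n) R :=
  ∑ i, X i * pderiv i f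

/-- The operator `θ(θ-1)(θ-2)⋯(θ-N+1)`, i.e. the composition of the operators
`f ↦ θf - j·f` for `j = 0, 1, …, N-1`. -/
noncomputable def eulerFactorial {R : Type*} [CommRing R] {n : ℕ} :
    ℕ → MvPolynomial (Fin n) R → MvPolynomial (Fin n) R
  | 0 => id
  | (N + 1) => fun f => eulerFactorial N (eulerOp f - (N : MvPolynomial (Fin n) R) * f)

section Aux

variable {R : Type*} [CommRing R] {n : ℕ}

lemma iterate_pderiv_monomial (i : Fin n) (k : ℕ) (d : Fin n →₀ ℕ) (a : R) :
    (fun h => pderiv i h)^[k] (monomial d a)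
      = monomial (d - Finsupp.single i k) (((d i).descFactorial k : R) * a) := by
  induction k with
  | zero => simp
  | succ k ih =>
    rw [Function.iterate_succ_apply', ih, pderiv_monomial]
    have h1 : d - Finsupp.single i k - Finsupp.single i 1 = d - Finsupp.single i (k + 1) := by
      rw [tsub_tsub, ← Finsupp.single_add]
    have h2 : (d - Finsupp.single i k) i = d i - k := by simp
    rw [h1, h2, Nat.descFactorial_succ]
    congr 1
    push_cast
    ring

lemma vandermonde {ι : Type*} [DecidableEq ι] (s : Finset ι) (d : ι → ℕ) :
    ∀ N : ℕ, ∑ k ∈ Finset.piAntidiag s N, ∏ i ∈ s, (d i).choose (k i)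
      = (∑ i ∈ s, d i).choose N := by
  induction s using Finset.cons_induction with
  | empty =>
    intro N
    cases N with
    | zero => simp
    | succ N => simp [Finset.piAntidiag_empty_of_ne_zero (Nat.succ_ne_zero N)]
  | cons i s hi ih =>
    intro N
    rw [Finset.piAntidiag_cons hi, Finset.sum_disjiUnion, Finset.sum_cons, Nat.add_choose_eq]
    refine Finset.sum_congr rfl fun p hp => ?_
    rw [Finset.sum_map]
    have : ∀ g ∈ Finset.piAntidiag s p.2,
        ∏ j ∈ Finset.cons i s hi,
          (d j).choose ((addRightEmbedding fun t => if t = i then p.1 else 0) g j)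
        = (d i).choose p.1 * ∏ j ∈ s, (d j).choose (g j) := by
      intro g hg
      have hgi : g i = 0 := by
        by_contra h
        exact hi (((Finset.mem_piAntidiag).mp hg).2 i h)
      rw [Finset.prod_cons]
      simp only [addRightEmbedding_apply, Pi.add_apply]
      congr 1
      · simp [hgi]
      · refine Finset.prod_congr rfl fun j hj => ?_
        have : j ≠ i := fun h => hi (h ▸ hj)
        simp [this]
    rw [Finset.sum_congr rfl this, ← Finset.mul_sum, ih p.2]

lemma key_identity (d : Fin n →₀ ℕ) (N : ℕ) :
    ∑ α ∈ Finset.Nat.antidiagonalTuple n N,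
      Nat.multinomial Finset.univ α * ∏ i, (d i).descFactorial (α i)
      = (∑ i, d i).descFactorial N := by
  rw [← Finset.piAntidiag_univ_fin_eq_antidiagonalTuple]
  have h1 : ∀ α ∈ Finset.piAntidiag (Finset.univ : Finset (Fin n)) N,
      Nat.multinomial Finset.univ α * ∏ i, (d i).descFactorial (α i)
        = N.factorial * ∏ i, (d i).choose (α i) := by
    intro α hα
    have hs : ∑ i, α i = N := ((Finset.mem_piAntidiag).mp hα).1
    have hd : (∏ i, (d i).descFactorial (α i))
        = (∏ i, (α i).factorial) * ∏ i, (d i).choose (α i) := by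
      rw [← Finset.prod_mul_distrib]
      exact Finset.prod_congr rfl fun i _ =>
        Nat.descFactorial_eq_factorial_mul_choose _ _
    rw [hd, ← mul_assoc, mul_comm (Nat.multinomial _ _), Nat.multinomial_spec, hs]
  rw [Finset.sum_congr rfl h1, ← Finset.mul_sum, vandermonde,
    Nat.descFactorial_eq_factorial_mul_choose]

lemma foldl_pderiv_monomial (α : Fin n → ℕ) :
    ∀ (l : List (Fin n)), l.Nodup → ∀ (d : Fin n →₀ ℕ) (a : R),
    l.foldl (fun g i => (fun h => pderiv i h)^[α i] g) (monomial d a)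
      = monomial (d - (l.map fun i => Finsupp.single i (α i)).sum)
          (((l.map fun i => (d i).descFactorial (α i)).prod : ℕ) * a)
  | [], _, d, a => by simp
  | i :: l, hnd, d, a => by
    obtain ⟨hi, hl⟩ := List.nodup_cons.mp hnd
    rw [List.foldl_cons, iterate_pderiv_monomial, foldl_pderiv_monomial α l hl]
    have hmap : l.map (fun j => (((d - Finsupp.single i (α i)) : Fin n →₀ ℕ) j).descFactorial (α j))
        = l.map fun j => (d j).descFactorial (α j) := by
      refine List.map_congr_left fun j hj => ?_
      have hji : i ≠ j := fun h => hi (h ▸ hj)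
      simp [Finsupp.tsub_apply, Finsupp.single_apply, hji]
    rw [hmap, List.map_cons, List.sum_cons, List.map_cons, List.prod_cons, tsub_tsub]
    congr 1
    push_cast
    ring

lemma partialDerivPow_monomial (α : Fin n → ℕ) (d : Fin n →₀ ℕ) (a : R) :
    partialDerivPow α (monomial d a)
      = monomial (d - ∑ i, Finsupp.single i (α i))
          ((∏ i, (d i).descFactorial (α i) : ℕ) * a) := by
  rw [partialDerivPow, foldl_pderiv_monomial α _ (List.nodup_finRange n),
    ← Fin.sum_univ_def, ← Fin.prod_univ_def]

lemma iterate_pderiv_add (i : Fin n) (k : ℕ) (p q : MvPolynomial (Fin n) R) :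
    (fun h => pderiv i h)^[k] (p + q)
      = (fun h => pderiv i h)^[k] p + (fun h => pderiv i h)^[k] q := by
  induction k generalizing p q with
  | zero => rfl
  | succ k ih => simp only [Function.iterate_succ_apply, map_add, ih]

lemma partialDerivPow_add (α : Fin n → ℕ) (p q : MvPolynomial (Fin n) R) :
    partialDerivPow α (p + q) = partialDerivPow α p + partialDerivPow α q := by
  unfold partialDerivPow
  generalize List.finRange n = l
  induction l generalizing p q with
  | nil => rfl
  | cons i l ih =>
    rw [List.foldl_cons, List.foldl_cons, List.foldl_cons, iterate_pderiv_add]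
    exact ih _ _

lemma eulerOp_add (p q : MvPolynomial (Fin n) R) :
    eulerOp (p + q) = eulerOp p + eulerOp q := by
  simp [eulerOp, map_add, mul_add, Finset.sum_add_distrib]

lemma eulerFactorial_add (N : ℕ) (p q : MvPolynomial (Fin n) R) :
    eulerFactorial N (p + q) = eulerFactorial N p + eulerFactorial N q := by
  induction N generalizing p q with
  | zero => rfl
  | succ N ih =>
    show eulerFactorial N _ = eulerFactorial N _ + eulerFactorial N _
    rw [← ih]
    congr 1
    rw [eulerOp_add]
    ring

lemma eulerOp_monomial (d : Fin n →₀ ℕ) (a : R) :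
    eulerOp (monomial d a) = monomial d (((∑ i, d i : ℕ) : R) * a) := by
  unfold eulerOp
  have h : ∀ i : Fin n, (X i : MvPolynomial (Fin n) R) * pderiv i (monomial d a)
      = monomial d (((d i : ℕ) : R) * a) := by
    intro i
    rw [pderiv_monomial, X, monomial_mul, one_mul]
    by_cases hdi : d i = 0
    · simp [hdi]
    · have hle : Finsupp.single i 1 ≤ d :=
        Finsupp.single_le_iff.mpr (Nat.one_le_iff_ne_zero.mpr hdi)
      rw [add_tsub_cancel_of_le hle]
      congr 1
      ring
  rw [Finset.sum_congr rfl fun i _ => h i, ← map_sum, ← Finset.sum_mul, Nat.cast_sum]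

lemma cast_descFactorial_mul_sub (m N : ℕ) :
    (m.descFactorial N : R) * ((m : R) - N) = (m.descFactorial (N + 1) : R) := by
  rcases le_or_gt N m with h | h
  · rw [Nat.descFactorial_succ, Nat.cast_mul, Nat.cast_sub h]
    ring
  · rw [Nat.descFactorial_eq_zero_iff_lt.mpr h,
      Nat.descFactorial_eq_zero_iff_lt.mpr (h.trans (Nat.lt_succ_self N))]
    simp

lemma eulerFactorial_monomial (N : ℕ) (d : Fin n →₀ ℕ) (a : R) :
    eulerFactorial N (monomial d a)
      = monomial d ((((∑ i, d i).descFactorial N : ℕ) : R) * a) := by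
  induction N generalizing a with
  | zero => simp [eulerFactorial]
  | succ N ih =>
    show eulerFactorial N _ = _
    have harg : eulerOp (monomial d a) - (N : MvPolynomial (Fin n) R) * monomial d a
        = monomial d ((((∑ i, d i : ℕ) : R) - N) * a) := by
      rw [eulerOp_monomial, ← map_natCast (C : R →+* MvPolynomial (Fin n) R) N,
        C_mul_monomial, ← map_sub]
      congr 1
      ring
    rw [harg, ih, ← mul_assoc, cast_descFactorial_mul_sub]

end Aux

/-- `Σ_{|α|=N} (N!/α!) · x^α · ∂^α = θ(θ-1)⋯(θ-N+1)` as operators on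
`R[x_1,…,x_n]`. -/
theorem sum_multinomial_xpow_partialDerivPow_eq_eulerFactorial
    {R : Type*} [CommRing R] {n : ℕ} (hn : 1 ≤ n) (N : ℕ)
    (f : MvPolynomial (Fin n) R) :
    ∑ α ∈ Finset.Nat.antidiagonalTuple n N,
      (Nat.multinomial Finset.univ α : MvPolynomial (Fin n) R) *
        ((∏ i, X i ^ α i) * partialDerivPow α f)
      = eulerFactorial N f := by
  induction f using MvPolynomial.induction_on' with
  | add p q hp hq =>
    rw [eulerFactorial_add, ← hp, ← hq, ← Finset.sum_add_distrib]
    refine Finset.sum_congr rfl fun α _ => ?_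
    rw [partialDerivPow_add]
    ring
  | monomial d a =>
    rw [eulerFactorial_monomial]
    have hterm : ∀ α ∈ Finset.Nat.antidiagonalTuple n N,
        (Nat.multinomial Finset.univ α : MvPolynomial (Fin n) R) *
          ((∏ i, X i ^ α i) * partialDerivPow α (monomial d a))
        = monomial d
            (((Nat.multinomial Finset.univ α * ∏ i, (d i).descFactorial (α i) : ℕ) : R) * a) := by
      intro α _
      have hX : (∏ i, (X i : MvPolynomial (Fin n) R) ^ α i)
          = monomial (∑ i, Finsupp.single i (α i)) 1 := by
        simp_rw [X_pow_eq_monomial]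
        exact (monomial_sum_one _ _).symm
      rw [partialDerivPow_monomial, hX, monomial_mul, one_mul,
        ← map_natCast (C : R →+* MvPolynomial (Fin n) R), C_mul_monomial]
      by_cases hle : ∀ i, α i ≤ d i
      · have hD : (∑ i, Finsupp.single i (α i) : Fin n →₀ ℕ) ≤ d := by
          rw [Finsupp.le_def]
          intro j
          have : (∑ i, Finsupp.single i (α i) : Fin n →₀ ℕ) j = α j := by
            rw [Finsupp.finset_sum_apply]
            simp [Finsupp.single_apply]
          rw [this]
          exact hle j
        rw [add_tsub_cancel_of_le hD]
        push_cast
        ring_nf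
      · push_neg at hle
        obtain ⟨i, hi⟩ := hle
        have hz : (∏ i, (d i).descFactorial (α i)) = 0 :=
          Finset.prod_eq_zero (Finset.mem_univ i)
            (Nat.descFactorial_eq_zero_iff_lt.mpr hi)
        simp [hz]
    rw [Finset.sum_congr rfl hterm, ← map_sum]
    congr 1
    rw [← Finset.sum_mul, ← Nat.cast_sum, key_identity]
end

section
/- Let k be an algebraically closed field, and let p_1,…,p_n ∈ k[x_1,…,x_n] be homogeneous polynomials (n polynomials in n variables) whose common zero set in k^n is exactly {0}. Let M = deg p_1 + ⋯ + deg p_n. Then every monomial x^α with |α| > M − n belongs to the ideal of k[x_1,…,x_n] generated by p_1,…,p_n. -/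
open MvPolynomial Pointwise

noncomputable section KoszulCech

variable {n : ℕ}

/-! ### Koszul-type chains over an arbitrary commutative ring -/

section Chains
variable {A : Type*} [CommRing A]

def eps (i : Fin n) (T : Finset (Fin n)) : ℤ := (-1 : ℤ) ^ (T.filter (fun j => j < i)).card

def bd (P : Fin n → A) (c : Finset (Fin n) → A) : Finset (Fin n) → A :=
  fun T => ∑ i ∈ Tᶜ, eps i T • (P i * c (insert i T))

def hh (Λ : Fin n → A) (c : Finset (Fin n) → A) : Finset (Fin n) → A :=
  fun T => ∑ i ∈ T, eps i (T.erase i) • (Λ i * c (T.erase i))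

lemma eps_insert (i j : Fin n) (U : Finset (Fin n)) (hj : j ∉ U) :
    eps i (insert j U) = (if j < i then -1 else 1) * eps i U := by
  unfold eps
  rw [Finset.filter_insert]
  split
  · rw [Finset.card_insert_of_notMem (fun h => hj (Finset.mem_of_mem_filter j h)), pow_succ]
    ring
  · rw [one_mul]

lemma eps_mul_self (i : Fin n) (T : Finset (Fin n)) : eps i T * eps i T = 1 := by
  unfold eps; rw [← pow_add]; exact Even.neg_one_pow ⟨_, rfl⟩

lemma eps_cross (i j : Fin n) (U : Finset (Fin n)) (hi : i ∉ U) (hj : j ∉ U) (hij : i ≠ j) :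
    eps i (insert j U) * eps j (insert i U) = -(eps i U * eps j U) := by
  rw [eps_insert i j U hj, eps_insert j i U hi]
  rcases lt_or_gt_of_ne hij with h | h
  · rw [if_neg (asymm h), if_pos h]; ring
  · rw [if_pos h, if_neg (asymm h)]; ring

lemma eps_sgn (i j : Fin n) (U : Finset (Fin n)) (hi : i ∉ U) (hj : j ∉ U) (hij : i ≠ j) :
    eps i (insert j U) * eps j U = -(eps j (insert i U) * eps i U) := by
  have h1 := eps_cross i j U hi hj hij
  have h2 := eps_mul_self j U
  have h3 := eps_mul_self j (insert i U)
  linear_combination (eps j U * eps j (insert i U)) * h1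
    - (eps i (insert j U) * eps j U) * h3 - (eps i U * eps j (insert i U)) * h2

lemma antisym_sum {M : Type*} [AddCommGroup M] (s : Finset (Fin n)) (F : Fin n → Fin n → M)
    (hF : ∀ i ∈ s, ∀ j ∈ s, i ≠ j → F i j = -F j i) :
    ∑ i ∈ s, ∑ j ∈ s.erase i, F i j = 0 := by
  rw [Finset.sum_sigma']
  apply Finset.sum_involution (fun p _ => (⟨p.2, p.1⟩ : (_ : Fin n) × Fin n))
  · intro p hp
    simp only [Finset.mem_sigma, Finset.mem_erase] at hp
    have := hF p.1 hp.1 p.2 hp.2.2 (Ne.symm hp.2.1)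
    simp [this]
  · intro p hp _ h
    simp only [Finset.mem_sigma, Finset.mem_erase] at hp
    apply hp.2.1
    have := congrArg (fun q : (_ : Fin n) × Fin n => q.2) h
    exact (by simpa using this : p.fst = p.snd).symm
  · intro p hp
    simp only [Finset.mem_sigma, Finset.mem_erase] at hp ⊢
    exact ⟨hp.2.2, Ne.symm hp.2.1, hp.1⟩
  · intro p hp; rfl

lemma bd_bd (P : Fin n → A) (c : Finset (Fin n) → A) (T : Finset (Fin n)) :
    bd P (bd P c) T = 0 := by
  unfold bd
  have : ∀ i ∈ Tᶜ, eps i T • (P i * ∑ j ∈ (insert i T)ᶜ, eps j (insert i T) • (P j * c (insert j (insert i T))))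
      = ∑ j ∈ Tᶜ.erase i, (eps i T * eps j (insert i T)) • (P i * (P j * c (insert j (insert i T)))) := by
    intro i hi
    rw [Finset.compl_insert, Finset.mul_sum, Finset.smul_sum]
    exact Finset.sum_congr rfl (fun j _ => by rw [mul_smul_comm, smul_smul])
  rw [Finset.sum_congr rfl this]
  apply antisym_sum
  intro i hi j hj hij
  have hi' : i ∉ T := by simpa using hi
  have hj' : j ∉ T := by simpa using hj
  have hsgn := eps_sgn j i T hj' hi' hij.symm
  rw [Finset.insert_comm j i T]
  rw [show eps i T * eps j (insert i T) = -(eps j T * eps i (insert j T)) by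
    rw [mul_comm (eps i T), mul_comm (eps j T)]; exact hsgn]
  rw [neg_smul, neg_inj]
  ring

lemma homotopy (P Λ : Fin n → A) (c : Finset (Fin n) → A) (T : Finset (Fin n)) :
    bd P (hh Λ c) T + hh Λ (bd P c) T = (∑ i, P i * Λ i) * c T := by
  have h1 : bd P (hh Λ c) T
      = (∑ i ∈ Tᶜ, (P i * Λ i) * c T)
        + ∑ i ∈ Tᶜ, ∑ j ∈ T, (eps i T * eps j (insert i (T.erase j))) •
            (P i * (Λ j * c (insert i (T.erase j)))) := by
    unfold bd hh
    rw [← Finset.sum_add_distrib]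
    apply Finset.sum_congr rfl
    intro i hi
    have hiT : i ∉ T := by simpa using hi
    rw [Finset.sum_insert hiT, Finset.erase_insert hiT, mul_add, smul_add]
    congr 1
    · rw [mul_smul_comm, smul_smul, eps_mul_self, one_smul, mul_assoc]
    · rw [Finset.mul_sum, Finset.smul_sum]
      apply Finset.sum_congr rfl
      intro j hj
      have hne : j ≠ i := fun h => hiT (h ▸ hj)
      rw [Finset.erase_insert_of_ne hne.symm, mul_smul_comm, smul_smul]
  have h2 : hh Λ (bd P c) T
      = (∑ j ∈ T, (P j * Λ j) * c T)
        + ∑ j ∈ T, ∑ i ∈ Tᶜ, (eps j (T.erase j) * eps i (T.erase j)) •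
            (Λ j * (P i * c (insert i (T.erase j)))) := by
    unfold hh bd
    rw [← Finset.sum_add_distrib]
    apply Finset.sum_congr rfl
    intro j hj
    rw [Finset.compl_erase, Finset.sum_insert (by simpa using hj : j ∉ Tᶜ),
      Finset.insert_erase hj, mul_add, smul_add]
    congr 1
    · rw [mul_smul_comm, smul_smul, eps_mul_self, one_smul]; ring
    · rw [Finset.mul_sum, Finset.smul_sum]
      exact Finset.sum_congr rfl fun i hi => by rw [mul_smul_comm, smul_smul]
  rw [h1, h2, Finset.sum_comm (s := T) (t := Tᶜ)]
  have h3 : ∀ i ∈ Tᶜ, ∀ j ∈ T,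
      (eps i T * eps j (insert i (T.erase j))) • (P i * (Λ j * c (insert i (T.erase j))))
      + (eps j (T.erase j) * eps i (T.erase j)) • (Λ j * (P i * c (insert i (T.erase j)))) = 0 := by
    intro i hi j hj
    have hiT : i ∉ T := by simpa using hi
    have hiU : i ∉ T.erase j := fun h => hiT (Finset.mem_of_mem_erase h)
    have hjU : j ∉ T.erase j := Finset.notMem_erase j T
    have hij : i ≠ j := fun h => hiT (h ▸ hj)
    have key := eps_cross i j (T.erase j) hiU hjU hij
    rw [Finset.insert_erase hj] at key
    rw [key, neg_smul]
    rw [show P i * (Λ j * c (insert i (T.erase j))) = Λ j * (P i * c (insert i (T.erase j))) by ring]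
    ring
  have h4 : (∑ i ∈ Tᶜ, ∑ j ∈ T, (eps i T * eps j (insert i (T.erase j))) •
            (P i * (Λ j * c (insert i (T.erase j)))))
        + ∑ i ∈ Tᶜ, ∑ j ∈ T, (eps j (T.erase j) * eps i (T.erase j)) •
            (Λ j * (P i * c (insert i (T.erase j))))
      = ∑ i ∈ Tᶜ, ∑ j ∈ T, ((eps i T * eps j (insert i (T.erase j))) •
            (P i * (Λ j * c (insert i (T.erase j))))
          + (eps j (T.erase j) * eps i (T.erase j)) • (Λ j * (P i * c (insert i (T.erase j))))) := by
    rw [← Finset.sum_add_distrib]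
    exact Finset.sum_congr rfl fun i _ => (Finset.sum_add_distrib).symm
  have h5 : (∑ i ∈ Tᶜ, ∑ j ∈ T, ((eps i T * eps j (insert i (T.erase j))) •
            (P i * (Λ j * c (insert i (T.erase j))))
          + (eps j (T.erase j) * eps i (T.erase j)) • (Λ j * (P i * c (insert i (T.erase j)))))) = 0 := by
    rw [Finset.sum_congr rfl (fun i hi => Finset.sum_congr rfl (fun j hj => h3 i hi j hj))]
    simp
  have h6 : ∑ i ∈ Tᶜ, (P i * Λ i) * c T + ∑ i ∈ T, (P i * Λ i) * c T = (∑ i, P i * Λ i) * c T := by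
    rw [Finset.sum_compl_add_sum, Finset.sum_mul]
  linear_combination h4 + h5 + h6

lemma bd_sub (P : Fin n → A) (c c' : Finset (Fin n) → A) (T : Finset (Fin n)) :
    bd P (fun S => c S - c' S) T = bd P c T - bd P c' T := by
  unfold bd
  rw [← Finset.sum_sub_distrib]
  exact Finset.sum_congr rfl fun i _ => by rw [mul_sub, smul_sub]

lemma hh_card (Λ : Fin n → A) (c : Finset (Fin n) → A) (r : ℕ)
    (hc : ∀ T, T.card ≠ r → c T = 0) :
    ∀ T : Finset (Fin n), T.card ≠ r + 1 → hh Λ c T = 0 := by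
  intro T hT
  unfold hh
  apply Finset.sum_eq_zero
  intro i hi
  have hpos : 0 < T.card := Finset.card_pos.mpr ⟨i, hi⟩
  rw [hc _ (by rw [Finset.card_erase_of_mem hi]; omega), mul_zero, smul_zero]

end Chains

/-! ### The Laurent algebra -/

variable {k : Type*} [Field k]

abbrev Lk (k : Type*) [Field k] (n : ℕ) : Type _ := AddMonoidAlgebra k (Fin n → ℤ)

def eZ (n : ℕ) : (Fin n →₀ ℕ) →+ (Fin n → ℤ) where
  toFun μ := fun i => (μ i : ℤ)
  map_zero' := by ext; simp
  map_add' a b := by ext; simp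

lemma eZ_inj : Function.Injective (eZ n) := by
  intro a b h
  ext i
  have : ((a i : ℤ)) = (b i : ℤ) := congrFun h i
  exact_mod_cast this

def phi : MvPolynomial (Fin n) k →+* Lk k n :=
  AddMonoidAlgebra.mapDomainRingHom k (eZ n)

lemma phi_apply (q : MvPolynomial (Fin n) k) : (phi q) = AddMonoidAlgebra.mapDomain (eZ n) q := rfl

lemma phi_inj : Function.Injective (phi (k := k) (n := n)) :=
  AddMonoidAlgebra.mapDomain_injective eZ_inj

lemma phi_monomial (μ : Fin n →₀ ℕ) (r : k) :
    phi (monomial μ r) = AddMonoidAlgebra.single (eZ n μ) r := by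
  rw [phi_apply, ← MvPolynomial.single_eq_monomial]
  exact AddMonoidAlgebra.mapDomain_single

lemma phi_support (q : MvPolynomial (Fin n) k) {γ : Fin n → ℤ} (hγ : γ ∈ (phi q).coeff.support) :
    ∃ μ ∈ q.support, γ = eZ n μ := by
  have h2 := Finsupp.mapDomain_support (f := eZ n) (s := AddMonoidAlgebra.coeff q) hγ
  rw [Finset.mem_image] at h2
  obtain ⟨μ, hμ, h⟩ := h2
  exact ⟨μ, hμ, h.symm⟩

/-- total degree of a Laurent exponent -/
def Dg (γ : Fin n → ℤ) : ℤ := ∑ j, γ j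

lemma Dg_add (γ δ : Fin n → ℤ) : Dg (γ + δ) = Dg γ + Dg δ := by
  unfold Dg; rw [← Finset.sum_add_distrib]; rfl

lemma Dg_eZ (μ : Fin n →₀ ℕ) : Dg (eZ n μ) = (∑ j ∈ μ.support, μ j : ℕ) := by
  unfold Dg
  rw [show ((∑ j ∈ μ.support, μ j : ℕ) : ℤ) = ∑ j ∈ μ.support, (μ j : ℤ) by push_cast; rfl]
  rw [Finset.sum_subset (Finset.subset_univ μ.support)]
  · rfl
  · intro x _ hx
    simp only [Finsupp.notMem_support_iff] at hx
    show ((μ x : ℕ) : ℤ) = 0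
    rw [hx]; rfl

/-! ### The distinguished monomial sets -/

def SV (n r : ℕ) : Set (Fin n → ℤ) := {γ | ∀ i : Fin n, r ≤ (i : ℕ) → 0 ≤ γ i}

def SW2 (n r : ℕ) : Set (Fin n → ℤ) :=
  {γ | (∀ i : Fin n, r + 1 ≤ (i : ℕ) → 0 ≤ γ i) ∧ ∃ i : Fin n, (i : ℕ) < r ∧ 0 ≤ γ i}

def SW (n r : ℕ) : Set (Fin n → ℤ) :=
  {γ | (∀ i : Fin n, r ≤ (i : ℕ) → 0 ≤ γ i) ∧ ∃ i : Fin n, (i : ℕ) < r ∧ 0 ≤ γ i}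

lemma SV_mono {r : ℕ} : SV n r ⊆ SV n (r + 1) := fun γ hγ i hi => hγ i (by omega)

lemma SV_inter_SW2 {r : ℕ} {γ : Fin n → ℤ} (h1 : γ ∈ SV n r) (h2 : γ ∈ SW2 n r) : γ ∈ SW n r :=
  ⟨h1, h2.2⟩

lemma SW_of_SV {r : ℕ} (hr : r < n) {γ : Fin n → ℤ} (h : γ ∈ SV n r) : γ ∈ SW n (r + 1) := by
  refine ⟨fun i hi => h i (by omega), ⟨⟨r, hr⟩, by simpa using hr, h ⟨r, hr⟩ (by simp)⟩⟩

lemma SW_of_SW2 {r : ℕ} {γ : Fin n → ℤ} (h : γ ∈ SW2 n r) : γ ∈ SW n (r + 1) :=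
  ⟨h.1, h.2.imp (fun i hi => ⟨by omega, hi.2⟩)⟩

lemma SW2_of_SW_not_SV {r : ℕ} {γ : Fin n → ℤ} (h : γ ∈ SW n (r + 1)) (h2 : γ ∉ SV n r) :
    γ ∈ SW2 n r := by
  obtain ⟨htail, i, hi, hnn⟩ := h
  refine ⟨fun j hj => htail j (by omega), ?_⟩
  by_cases hir : (i : ℕ) < r
  · exact ⟨i, hir, hnn⟩
  · exfalso
    apply h2
    intro j hj
    rcases Nat.lt_or_ge (j : ℕ) (r + 1) with h' | h'
    · have : (j : ℕ) = r := by omega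
      have : j = i := Fin.ext (by omega)
      exact this ▸ hnn
    · exact htail j h'


/-! ### Support propagation -/

lemma supp_sum {s : Finset (Fin n)} {f : Fin n → Lk k n} {X : Set (Fin n → ℤ)}
    (h : ∀ i ∈ s, ∀ γ ∈ (f i).coeff.support, γ ∈ X) : ∀ γ ∈ (∑ i ∈ s, f i).coeff.support, γ ∈ X := by
  intro γ hγ
  rw [AddMonoidAlgebra.coeff_sum] at hγ
  have h2 := Finsupp.support_finset_sum hγ
  rw [Finset.mem_biUnion] at h2
  obtain ⟨i, hi, hgi⟩ := h2
  exact h i hi γ hgi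

lemma supp_mul {x y : Lk k n} {X Y : Set (Fin n → ℤ)}
    (hx : ∀ γ ∈ x.coeff.support, γ ∈ X) (hy : ∀ γ ∈ y.coeff.support, γ ∈ Y) :
    ∀ γ ∈ (x * y).coeff.support, ∃ a ∈ X, ∃ b ∈ Y, γ = a + b := by
  intro γ hγ
  have h2 := AddMonoidAlgebra.support_coeff_mul_subset x y hγ
  rw [Finset.mem_add] at h2
  obtain ⟨a, ha, b, hb, h⟩ := h2
  exact ⟨a, hx a ha, b, hy b hb, h.symm⟩

lemma supp_bd {P : Fin n → Lk k n} {c : Finset (Fin n) → Lk k n}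
    {X : Fin n → Set (Fin n → ℤ)} {Y Z : Finset (Fin n) → Set (Fin n → ℤ)}
    (hP : ∀ i, ∀ γ ∈ (P i).coeff.support, γ ∈ X i)
    (hc : ∀ T, ∀ γ ∈ (c T).coeff.support, γ ∈ Y T)
    (hcomp : ∀ T, ∀ i, i ∉ T → ∀ a ∈ X i, ∀ b ∈ Y (insert i T), a + b ∈ Z T) :
    ∀ T, ∀ γ ∈ ((bd P c) T).coeff.support, γ ∈ Z T := by
  intro T
  apply supp_sum
  intro i hi γ hγ
  rw [AddMonoidAlgebra.coeff_smul] at hγ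
  have h1 := Finsupp.support_smul hγ
  obtain ⟨a, ha, b, hb, rfl⟩ := supp_mul (hP i) (hc (insert i T)) _ h1
  exact hcomp T i (by simpa using hi) a ha b hb

lemma supp_hh {Λ : Fin n → Lk k n} {c : Finset (Fin n) → Lk k n}
    {X : Fin n → Set (Fin n → ℤ)} {Y Z : Finset (Fin n) → Set (Fin n → ℤ)}
    (hΛ : ∀ i, ∀ γ ∈ (Λ i).coeff.support, γ ∈ X i)
    (hc : ∀ T, ∀ γ ∈ (c T).coeff.support, γ ∈ Y T)
    (hcomp : ∀ T, ∀ i, i ∈ T → ∀ a ∈ X i, ∀ b ∈ Y (T.erase i), a + b ∈ Z T) :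
    ∀ T, ∀ γ ∈ ((hh Λ c) T).coeff.support, γ ∈ Z T := by
  intro T
  apply supp_sum
  intro i hi γ hγ
  rw [AddMonoidAlgebra.coeff_smul] at hγ
  have h1 := Finsupp.support_smul hγ
  obtain ⟨a, ha, b, hb, rfl⟩ := supp_mul (hΛ i) (hc (T.erase i)) _ h1
  exact hcomp T i hi a ha b hb

lemma supp_sub {x y : Lk k n} {X : Set (Fin n → ℤ)}
    (hx : ∀ γ ∈ x.coeff.support, γ ∈ X) (hy : ∀ γ ∈ y.coeff.support, γ ∈ X) :
    ∀ γ ∈ (x - y).coeff.support, γ ∈ X := by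
  intro γ hγ
  rw [AddMonoidAlgebra.coeff_sub] at hγ
  rcases Finset.mem_union.mp (Finsupp.support_sub hγ) with h | h
  · exact hx γ h
  · exact hy γ h

lemma supp_add {x y : Lk k n} {X : Set (Fin n → ℤ)}
    (hx : ∀ γ ∈ x.coeff.support, γ ∈ X) (hy : ∀ γ ∈ y.coeff.support, γ ∈ X) :
    ∀ γ ∈ (x + y).coeff.support, γ ∈ X := by
  intro γ hγ
  rw [AddMonoidAlgebra.coeff_add] at hγ
  rcases Finset.mem_union.mp (Finsupp.support_add hγ) with h | h
  · exact hx γ h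
  · exact hy γ h

/-- surjectivity of `phi` onto elements with nonnegative exponents -/
lemma phi_surj (v : Lk k n) (hv : ∀ γ ∈ v.coeff.support, ∀ j, 0 ≤ γ j) :
    ∃ s : MvPolynomial (Fin n) k, phi s = v := by
  classical
  induction v using AddMonoidAlgebra.induction with
  | zero => exact ⟨0, map_zero _⟩
  | single_add a b f haf hb ih =>
    have hsupp : (AddMonoidAlgebra.single a b + f).coeff.support = insert a f.coeff.support := by
      rw [AddMonoidAlgebra.coeff_add, AddMonoidAlgebra.coeff_single, Finsupp.support_add_eq, Finsupp.support_single_ne_zero a hb]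
      · rfl
      · rw [Finsupp.support_single_ne_zero a hb]
        simpa using haf
    have ha' : ∀ j, 0 ≤ a j := hv a (by rw [hsupp]; exact Finset.mem_insert_self a _)
    obtain ⟨s, hs⟩ := ih (fun γ hγ => hv γ (by rw [hsupp]; exact Finset.mem_insert_of_mem hγ))
    refine ⟨monomial (Finsupp.equivFunOnFinite.symm (fun j => (a j).toNat)) b + s, ?_⟩
    rw [map_add, hs, phi_monomial]
    congr 1
    have : eZ n (Finsupp.equivFunOnFinite.symm (fun j => (a j).toNat)) = a := by
      funext j
      show ((a j).toNat : ℤ) = a j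
      exact Int.toNat_of_nonneg (ha' j)
    rw [this]

/-! ### Homogeneous component manipulation and step data -/

lemma eZ_apply (μ : Fin n →₀ ℕ) (j : Fin n) : eZ n μ j = (μ j : ℤ) := rfl

lemma Dg_eZ' (μ : Fin n →₀ ℕ) : Dg (eZ n μ) = (μ.degree : ℤ) := by
  rw [show μ.degree = ∑ j ∈ μ.support, μ j from rfl]
  exact Dg_eZ μ

lemma hc_mul {q pp : MvPolynomial (Fin n) k} {d N : ℕ} (hp : pp.IsHomogeneous d) (hdN : d ≤ N) :
    homogeneousComponent N (q * pp) = homogeneousComponent (N - d) q * pp := by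
  conv_lhs => rw [← sum_homogeneousComponent q]
  rw [Finset.sum_mul, map_sum]
  have hterm : ∀ m ∈ Finset.range (q.totalDegree + 1),
      homogeneousComponent N (homogeneousComponent m q * pp)
        = if m = N - d then homogeneousComponent m q * pp else 0 := by
    intro m _
    rw [homogeneousComponent_of_mem ((mem_homogeneousSubmodule _ _).mpr
      ((homogeneousComponent_isHomogeneous m q).mul hp))]
    exact if_congr ⟨fun h => by omega, fun h => by omega⟩ rfl rfl
  rw [Finset.sum_congr rfl hterm]
  rw [Finset.sum_ite_eq' (Finset.range (q.totalDegree + 1)) (N - d)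
    (fun m => homogeneousComponent m q * pp)]
  split
  · rfl
  · rename_i hmem
    rw [Finset.mem_range] at hmem
    rw [homogeneousComponent_eq_zero _ _ (by omega), zero_mul]

section StepData
variable [IsAlgClosed k]
variable (p : Fin n → MvPolynomial (Fin n) k) (deg : Fin n → ℕ)

lemma exists_powX (hz : {ξ : Fin n → k | ∀ i, eval ξ (p i) = 0} = {0}) (j : Fin n) :
    ∃ m : ℕ, (X j : MvPolynomial (Fin n) k) ^ m ∈ Ideal.span (Set.range p) := by
  have hXj : (X j : MvPolynomial (Fin n) k)
      ∈ vanishingIdeal k (zeroLocus k (Ideal.span (Set.range p))) := by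
    rw [mem_vanishingIdeal_iff]
    intro x hx
    have hx0 : x ∈ ({0} : Set (Fin n → k)) := by
      rw [← hz]
      intro i
      exact hx (p i) (Ideal.subset_span ⟨i, rfl⟩)
    rw [Set.mem_singleton_iff] at hx0
    subst hx0
    simp
  rw [vanishingIdeal_zeroLocus_eq_radical] at hXj
  exact hXj

lemma step_data (hp : ∀ i, (p i).IsHomogeneous (deg i))
    (hz : {ξ : Fin n → k | ∀ i, eval ξ (p i) = 0} = {0}) (v : Fin n) :
    ∃ (N : ℕ) (g : Fin n → MvPolynomial (Fin n) k),
      (∀ i, deg i ≤ N) ∧ (∀ i, (g i).IsHomogeneous (N - deg i)) ∧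
      (X v : MvPolynomial (Fin n) k) ^ N = ∑ i, g i * p i := by
  obtain ⟨m, hm⟩ := exists_powX p hz v
  set N := m + ∑ i, deg i with hN
  have hNdeg : ∀ i, deg i ≤ N := fun i =>
    le_trans (Finset.single_le_sum (fun i _ => Nat.zero_le (deg i)) (Finset.mem_univ i))
      (by omega)
  have hXN : (X v : MvPolynomial (Fin n) k) ^ N ∈ Ideal.span (Set.range p) := by
    rw [hN, pow_add, mul_comm]
    exact Ideal.mul_mem_left _ _ hm
  obtain ⟨q, hq⟩ := (Submodule.mem_span_range_iff_exists_fun _).mp hXN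
  refine ⟨N, fun i => homogeneousComponent (N - deg i) (q i), hNdeg,
    fun i => homogeneousComponent_isHomogeneous _ _, ?_⟩
  have hhom : ((X v : MvPolynomial (Fin n) k) ^ N).IsHomogeneous N := by
    simpa using (isHomogeneous_X k v).pow N
  calc (X v : MvPolynomial (Fin n) k) ^ N
      = homogeneousComponent N ((X v : MvPolynomial (Fin n) k) ^ N) := by
        rw [homogeneousComponent_of_mem ((mem_homogeneousSubmodule _ _).mpr hhom), if_pos rfl]
    _ = homogeneousComponent N (∑ i, q i * p i) := by
        rw [show ∑ i, q i * p i = (X v : MvPolynomial (Fin n) k) ^ N by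
          rw [← hq]; exact Finset.sum_congr rfl fun i _ => (smul_eq_mul _ _).symm]
    _ = ∑ i, homogeneousComponent (N - deg i) (q i) * p i := by
        rw [map_sum]
        exact Finset.sum_congr rfl fun i _ => hc_mul (hp i) (hNdeg i)

lemma Psupp (hp : ∀ i, (p i).IsHomogeneous (deg i)) (i : Fin n) :
    ∀ γ ∈ (phi (p i)).coeff.support, (∀ j, 0 ≤ γ j) ∧ Dg γ = (deg i : ℤ) := by
  intro γ hγ
  obtain ⟨μ, hμ, rfl⟩ := phi_support _ hγ
  refine ⟨fun j => Int.natCast_nonneg _, ?_⟩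
  rw [Dg_eZ']
  congr 1
  by_contra hne
  exact (mem_support_iff.mp hμ) ((hp i).coeff_eq_zero hne)

end StepData

/-! ### homogeneous support degrees -/

lemma homog_supp (hom : ∀ {φ : MvPolynomial (Fin n) k} {d : ℕ}, φ.IsHomogeneous d → True) : True := trivial

lemma homogSuppDeg {φ : MvPolynomial (Fin n) k} {d : ℕ} (h : φ.IsHomogeneous d) :
    ∀ γ ∈ (phi φ).coeff.support, (∀ j, 0 ≤ γ j) ∧ Dg γ = (d : ℤ) := by
  intro γ hγ
  obtain ⟨μ, hμ, rfl⟩ := phi_support _ hγ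
  refine ⟨fun j => Int.natCast_nonneg _, ?_⟩
  rw [Dg_eZ']
  congr 1
  by_contra hne
  exact (mem_support_iff.mp hμ) (h.coeff_eq_zero hne)

/-! ### The key downward induction -/

section Key
variable [IsAlgClosed k]

lemma key (p : Fin n → MvPolynomial (Fin n) k) (deg : Fin n → ℕ)
    (hp : ∀ i, (p i).IsHomogeneous (deg i))
    (hz : {ξ : Fin n → k | ∀ i, eval ξ (p i) = 0} = {0})
    (τ : ℤ) (hτ : (∑ i, (deg i : ℤ)) - n < τ) :
    ∀ (m r : ℕ), r + m = n →
    ∀ c : Finset (Fin n) → Lk k n,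
      (∀ T, T.card ≠ r → c T = 0) →
      (∀ T, ∀ γ ∈ (c T).coeff.support,
        γ ∈ SV n r ∧ τ - (∑ i ∈ T, (deg i : ℤ)) ≤ Dg γ) →
      (∀ T, ∀ γ ∈ ((bd (fun i => phi (p i)) c) T).coeff.support, γ ∈ SW n r) →
      ∃ b : Finset (Fin n) → Lk k n,
        (∀ T, ∀ γ ∈ (b T).coeff.support, γ ∈ SV n r) ∧
        (∀ T, ∀ γ ∈ (c T - (bd (fun i => phi (p i)) b) T).coeff.support, γ ∈ SW n r) := by
  classical
  intro m
  induction m with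
  | zero =>
    intro r hrm c hcard hmain _
    have hrn : r = n := by omega
    refine ⟨fun _ => 0, by simp, ?_⟩
    intro T γ hγ
    have hbz : bd (fun i => phi (p i)) (fun _ => (0 : Lk k n)) T = 0 := by
      simp [bd]
    rw [hbz, sub_zero] at hγ
    by_cases hT : T.card = r
    · have hTu : T = Finset.univ := Finset.eq_univ_of_card T (by rw [hT, hrn]; simp)
      subst hTu
      obtain ⟨_, hdg⟩ := hmain Finset.univ γ hγ
      constructor
      · intro i hi
        have := i.isLt
        omega
      · by_contra hcon
        push_neg at hcon
        have hneg : ∀ j : Fin n, γ j ≤ -1 := by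
          intro j
          have h2 := j.isLt
          have := hcon j (by omega)
          omega
        have hsum : Dg γ ≤ -(n : ℤ) := by
          unfold Dg
          calc ∑ j, γ j ≤ ∑ _j : Fin n, (-1 : ℤ) := Finset.sum_le_sum (fun j _ => hneg j)
            _ = -(n : ℤ) := by simp
        linarith
    · rw [hcard T hT] at hγ
      simp at hγ
  | succ m ih =>
    intro r hrm c hcard hmain hcyc
    have hrn : r < n := by omega
    set v : Fin n := ⟨r, hrn⟩ with hv
    have hvr : ((v : Fin n) : ℕ) = r := rfl
    obtain ⟨N, g, hNdeg, hghom, hgsum⟩ := step_data p deg hp hz v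
    set P : Fin n → Lk k n := fun i => phi (p i) with hPdef
    set E : Lk k n := AddMonoidAlgebra.single (-(eZ n (Finsupp.single v N))) 1 with hE
    set lam : Fin n → Lk k n := fun i => phi (g i) * E with hlam
    have hEcoord : ∀ j : Fin n, j ≠ v → (-(eZ n (Finsupp.single v N))) j = 0 := by
      intro j hj
      show -((Finsupp.single v N j : ℕ) : ℤ) = 0
      rw [Finsupp.single_eq_of_ne hj]
      simp
    have hEdg : Dg (-(eZ n (Finsupp.single v N))) = -(N : ℤ) := by
      unfold Dg
      simp only [Pi.neg_apply]
      rw [Finset.sum_neg_distrib]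
      have hsum : ∑ j, (eZ n (Finsupp.single v N)) j = (N : ℤ) := by
        rw [Finset.sum_eq_single_of_mem v (Finset.mem_univ v)]
        · show ((Finsupp.single v N v : ℕ) : ℤ) = (N : ℤ)
          rw [Finsupp.single_eq_same]
        · intro j _ hj
          show ((Finsupp.single v N j : ℕ) : ℤ) = 0
          rw [Finsupp.single_eq_of_ne hj]
          rfl
      rw [hsum]
    have hLam : ∀ i, ∀ γ ∈ (lam i).coeff.support, (∀ j, j ≠ v → 0 ≤ γ j) ∧ Dg γ = -((deg i : ℤ)) := by
      intro i γ hγ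
      rw [hlam] at hγ
      obtain ⟨a, ha, bb, hbb, rfl⟩ := supp_mul
        (X := {γ2 | (∀ j, 0 ≤ γ2 j) ∧ Dg γ2 = ((N - deg i : ℕ) : ℤ)})
        (Y := {γ2 | γ2 = -(eZ n (Finsupp.single v N))})
        (homogSuppDeg (hghom i))
        (fun γ2 hγ2 => Finset.mem_singleton.mp (Finsupp.support_single_subset hγ2)) γ hγ
      rw [Set.mem_setOf_eq] at hbb
      subst hbb
      constructor
      · intro j hj
        have h1 := ha.1 j
        have h2 := hEcoord j hj
        show 0 ≤ a j + _
        rw [h2]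
        omega
      · rw [Dg_add, ha.2, hEdg]
        have := hNdeg i
        push_cast [Nat.cast_sub this]
        ring
    have hsum1 : ∑ i, P i * lam i = 1 := by
      have h1 : ∀ i, P i * lam i = phi (g i * p i) * E := by
        intro i
        rw [hPdef, hlam, map_mul]
        ring
      rw [Finset.sum_congr rfl (fun i _ => h1 i), ← Finset.sum_mul, ← map_sum, ← hgsum]
      rw [X_pow_eq_monomial, phi_monomial, hE, AddMonoidAlgebra.single_mul_single,
        add_neg_cancel, mul_one]
      exact (AddMonoidAlgebra.one_def).symm
    have hbcard : ∀ T : Finset (Fin n), T.card ≠ r + 1 → hh lam c T = 0 := hh_card lam c r hcard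
    have hbmain : ∀ T, ∀ γ ∈ ((hh lam c) T).coeff.support,
        γ ∈ SV n (r+1) ∧ τ - (∑ i ∈ T, (deg i : ℤ)) ≤ Dg γ := by
      apply supp_hh (X := fun i => {γ | (∀ j, j ≠ v → 0 ≤ γ j) ∧ Dg γ = -((deg i : ℤ))})
        (Y := fun T => {γ | γ ∈ SV n r ∧ τ - (∑ i ∈ T, (deg i : ℤ)) ≤ Dg γ}) hLam hmain
      intro T i hi a ha bb hbb
      constructor
      · intro j hj
        have hjv : j ≠ v := by
          intro hjeq
          rw [hjeq, hvr] at hj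
          omega
        have h1 := ha.1 j hjv
        have h2 := hbb.1 j (by omega)
        show 0 ≤ a j + bb j
        omega
      · show τ - (∑ i2 ∈ T, (deg i2 : ℤ)) ≤ Dg (a + bb)
        rw [Dg_add, ha.2]
        have hbbdg := hbb.2
        have herase := Finset.sum_erase_add T (fun i2 => (deg i2 : ℤ)) hi
        linarith
    have hbcyc0 : ∀ T, bd P (hh lam c) T = c T - hh lam (bd P c) T := by
      intro T
      have hco := homotopy P lam c T
      rw [hsum1, one_mul] at hco
      linear_combination hco
    have hWside : ∀ T, ∀ γ ∈ (hh lam (bd P c) T).coeff.support, γ ∈ SW2 n r := by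
      apply supp_hh (X := fun i => {γ | (∀ j, j ≠ v → 0 ≤ γ j) ∧ Dg γ = -((deg i : ℤ))})
        (Y := fun _ => SW n r) hLam hcyc
      intro T i hi a ha bb hbb
      constructor
      · intro j hj
        have hjv : j ≠ v := by
          intro hjeq
          rw [hjeq, hvr] at hj
          omega
        have h1 := ha.1 j hjv
        have h2 := hbb.1 j (by omega)
        show 0 ≤ a j + bb j
        omega
      · obtain ⟨i0, hi0r, hi0⟩ := hbb.2
        refine ⟨i0, hi0r, ?_⟩
        have hi0v : i0 ≠ v := by
          intro hieq
          rw [hieq, hvr] at hi0r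
          omega
        have := ha.1 i0 hi0v
        show 0 ≤ a i0 + bb i0
        omega
    have hbcyc : ∀ T, ∀ γ ∈ ((bd P (hh lam c)) T).coeff.support, γ ∈ SW n (r+1) := by
      intro T γ hγ
      rw [hbcyc0 T] at hγ
      rw [AddMonoidAlgebra.coeff_sub] at hγ
      rcases Finset.mem_union.mp (Finsupp.support_sub hγ) with h | h
      · exact SW_of_SV hrn (hmain T γ h).1
      · exact SW_of_SW2 (hWside T γ h)
    obtain ⟨aa, haa_sv, haa_rem⟩ := ih (r+1) (by omega) (hh lam c) hbcard hbmain hbcyc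
    set x : Finset (Fin n) → Lk k n := fun T => hh lam c T - bd P aa T with hx
    set b' : Finset (Fin n) → Lk k n := fun T => AddMonoidAlgebra.ofCoeff ((x T).coeff.filter (· ∈ SV n r)) with hb'
    have hb'sv : ∀ T, ∀ γ ∈ (b' T).coeff.support, γ ∈ SV n r := by
      intro T γ hγ
      rw [hb'] at hγ
      simp only [AddMonoidAlgebra.coeff_ofCoeff, Finsupp.support_filter, Finset.mem_filter] at hγ
      exact hγ.2
    have hu : ∀ T, ∀ γ ∈ (x T - b' T).coeff.support, γ ∈ SW2 n r := by
      intro T γ hγ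
      have hne := Finsupp.mem_support_iff.mp hγ
      rw [AddMonoidAlgebra.coeff_sub, Finsupp.sub_apply] at hne
      rw [show (b' T).coeff γ = if γ ∈ SV n r then (x T).coeff γ else 0 from rfl] at hne
      by_cases hsv : γ ∈ SV n r
      · rw [if_pos hsv] at hne
        simp at hne
      · rw [if_neg hsv, sub_zero] at hne
        have hmem : γ ∈ (x T).coeff.support := Finsupp.mem_support_iff.mpr hne
        exact SW2_of_SW_not_SV (haa_rem T γ hmem) hsv
    refine ⟨b', hb'sv, ?_⟩
    intro T γ hγ
    have hD : bd P (fun S => x S - b' S) T = bd P x T - bd P b' T := bd_sub P x b' T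
    have hx2 : bd P x T = bd P (hh lam c) T := by
      rw [hx]
      rw [bd_sub P (hh lam c) (bd P aa) T, bd_bd, sub_zero]
    have hfin : c T - bd P b' T = (c T - bd P (hh lam c) T) + bd P (fun S => x S - b' S) T := by
      rw [hD, hx2]
      ring
    have hs1 : ∀ γ2 ∈ ((c T - bd P (hh lam c) T) + bd P (fun S => x S - b' S) T).coeff.support,
        γ2 ∈ SW2 n r := by
      apply supp_add
      · intro γ2 hγ2
        have hrw : c T - bd P (hh lam c) T = hh lam (bd P c) T := by
          rw [hbcyc0 T]
          ring
        rw [hrw] at hγ2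
        exact hWside T γ2 hγ2
      · intro γ2 hγ2
        revert γ2 hγ2
        apply supp_bd (X := fun i => {γ2 | (∀ j, 0 ≤ γ2 j) ∧ Dg γ2 = ((deg i : ℤ))})
          (Y := fun _ => SW2 n r) (Z := fun _ => SW2 n r) (fun i => homogSuppDeg (hp i)) hu
        intro T' i _ a ha bb hbb
        constructor
        · intro j hj
          have h1 := ha.1 j
          have h2 := hbb.1 j hj
          show 0 ≤ a j + bb j
          omega
        · obtain ⟨i0, hi0r, hi0⟩ := hbb.2
          refine ⟨i0, hi0r, ?_⟩
          have := ha.1 i0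
          show 0 ≤ a i0 + bb i0
          omega
    have hs2 : ∀ γ2 ∈ (c T - bd P b' T).coeff.support, γ2 ∈ SV n r := by
      apply supp_sub
      · intro γ2 hγ2
        exact (hmain T γ2 hγ2).1
      · intro γ2 hγ2
        revert γ2 hγ2
        apply supp_bd (X := fun i => {γ2 | (∀ j, 0 ≤ γ2 j) ∧ Dg γ2 = ((deg i : ℤ))})
          (Y := fun _ => SV n r) (Z := fun _ => SV n r) (fun i => homogSuppDeg (hp i)) hb'sv
        intro T' i _ a ha bb hbb
        intro j hj
        have h1 := ha.1 j
        have h2 := hbb j hj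
        show 0 ≤ a j + bb j
        omega
    have hγ' := hγ
    rw [hfin] at hγ'
    exact SV_inter_SW2 (hs2 γ hγ) (hs1 γ hγ')

end Key

end KoszulCech

open MvPolynomial

/-- If `p_1,…,p_n` are homogeneous polynomials in `n` variables over an
algebraically closed field whose common zero set is exactly `{0}`, and
`M = Σ deg p_i`, then every monomial `x^α` with `|α| > M - n` lies in the ideal
generated by `p_1,…,p_n`. -/
theorem monomial_mem_ideal_span_of_common_zero_eq_zero
    {k : Type*} [Field k] [IsAlgClosed k] {n : ℕ}
    (p : Fin n → MvPolynomial (Fin n) k) (deg : Fin n → ℕ)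
    (hp : ∀ i, (p i).IsHomogeneous (deg i))
    (hz : {ξ : Fin n → k | ∀ i, eval ξ (p i) = 0} = {0})
    (α : Fin n → ℕ) (hα : ((∑ i, deg i : ℕ) : ℤ) - (n : ℤ) < ((∑ i, α i : ℕ) : ℤ)) :
    (∏ i, X i ^ α i) ∈ Ideal.span (Set.range p) := by
  classical
  set P : Fin n → Lk k n := fun i => phi (p i) with hP
  set f : MvPolynomial (Fin n) k := ∏ i, X i ^ α i with hf
  have hfmono : f = monomial (Finsupp.equivFunOnFinite.symm α) 1 := by
    rw [hf, ← prod_X_pow_eq_monomial,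
      Finset.prod_subset (Finset.subset_univ (Finsupp.equivFunOnFinite.symm α).support)
        (fun x _ hx => by simp only [Finsupp.notMem_support_iff] at hx; rw [hx, pow_zero])]
    exact Finset.prod_congr rfl (fun i _ => by simp)
  have hdeg_sym : (Finsupp.equivFunOnFinite.symm α).degree = ∑ i, α i := by
    rw [show (Finsupp.equivFunOnFinite.symm α).degree
        = ∑ i ∈ (Finsupp.equivFunOnFinite.symm α).support, (Finsupp.equivFunOnFinite.symm α) i
      from rfl]
    rw [Finset.sum_subset (Finset.subset_univ _)
      (fun x _ hx => by simpa only [Finsupp.notMem_support_iff] using hx)]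
    exact Finset.sum_congr rfl (fun i _ => by simp)
  have hfh : f.IsHomogeneous (∑ i, α i) := by
    rw [hfmono]
    exact isHomogeneous_monomial 1 hdeg_sym
  set τ : ℤ := ∑ i, (α i : ℤ) with hτdef
  have hτ : (∑ i, (deg i : ℤ)) - n < τ := by
    push_cast at hα
    exact hα
  set c : Finset (Fin n) → Lk k n := fun T => if T = ∅ then phi f else 0 with hc
  have hcard : ∀ T : Finset (Fin n), T.card ≠ 0 → c T = 0 := by
    intro T hT
    show (if T = ∅ then phi f else 0) = 0
    rw [if_neg (fun h => hT (by rw [h]; simp))]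
  have hsupp_f : ∀ γ ∈ (phi f).coeff.support, (∀ j, 0 ≤ γ j) ∧ Dg γ = τ := by
    intro γ hγ
    obtain ⟨h1, h2⟩ := homogSuppDeg hfh γ hγ
    refine ⟨h1, ?_⟩
    rw [h2, hτdef]
    push_cast
    rfl
  have hmain : ∀ T, ∀ γ ∈ (c T).coeff.support,
      γ ∈ SV n 0 ∧ τ - (∑ i ∈ T, (deg i : ℤ)) ≤ Dg γ := by
    intro T γ hγ
    by_cases hT : T = ∅
    · have hceq : c T = phi f := by
        show (if T = ∅ then phi f else 0) = phi f
        rw [if_pos hT]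
      rw [hceq] at hγ
      subst hT
      obtain ⟨h1, h2⟩ := hsupp_f γ hγ
      exact ⟨fun i _ => h1 i, by rw [h2]; simp⟩
    · rw [hcard T (fun h0 => hT (Finset.card_eq_zero.mp h0))] at hγ
      simp at hγ
  have hcyc : ∀ T, ∀ γ ∈ ((bd P c) T).coeff.support, γ ∈ SW n 0 := by
    intro T γ hγ
    have hz2 : bd P c T = 0 := by
      unfold bd
      apply Finset.sum_eq_zero
      intro i _
      have hceq : c (insert i T) = 0 := by
        show (if insert i T = ∅ then phi f else 0) = 0
        rw [if_neg (Finset.insert_ne_empty i T)]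
      rw [hceq]
      simp
    rw [hz2] at hγ
    simp at hγ
  obtain ⟨b, hbsv, hbrem⟩ := key p deg hp hz τ hτ n 0 (by omega) c hcard hmain hcyc
  have h0 : c ∅ - bd P b ∅ = 0 := by
    by_contra hne
    obtain ⟨γ, hγ⟩ := Finsupp.support_nonempty_iff.mpr (mt AddMonoidAlgebra.coeff_eq_zero.mp hne)
    obtain ⟨_, i, hi, _⟩ := hbrem ∅ γ hγ
    omega
  have hmain2 : phi f = bd P b ∅ := by
    have hcf : c ∅ = phi f := by
      show (if (∅ : Finset (Fin n)) = ∅ then phi f else 0) = phi f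
      rw [if_pos rfl]
    rw [← hcf]
    exact sub_eq_zero.mp h0
  have hexp : bd P b ∅ = ∑ i, P i * b {i} := by
    unfold bd
    rw [Finset.compl_empty]
    apply Finset.sum_congr rfl
    intro i _
    rw [show eps i (∅ : Finset (Fin n)) = 1 by unfold eps; simp, one_smul]
    simp
  have hbi : ∀ i : Fin n, ∃ s : MvPolynomial (Fin n) k, phi s = b {i} := by
    intro i
    apply phi_surj
    intro γ hγ j
    exact hbsv {i} γ hγ j (by omega)
  choose s hs using hbi
  have hphieq : phi f = phi (∑ i, s i * p i) := by
    rw [hmain2, hexp, map_sum]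
    apply Finset.sum_congr rfl
    intro i _
    rw [map_mul, hs i, hP]
    ring
  have hfeq : f = ∑ i, s i * p i := phi_inj hphieq
  rw [hfeq]
  apply Ideal.sum_mem
  intro i _
  exact Ideal.mul_mem_left _ _ (Ideal.subset_span ⟨i, rfl⟩)
end

section
/- Let k be a field of characteristic 0, and let α_1,…,α_m be nonzero linear forms on k^n that are pairwise non-proportional (no α_i is a scalar multiple of α_j for i ≠ j), regarded as homogeneous degree-1 polynomials in k[x_1,…,x_n]. For each j let s_j : k^n → k^n be a linear map that fixes the hyperplane ker α_j pointwise. If τ ∈ k[x_1,…,x_n] satisfies τ ∘ s_j = −τ (as polynomials, i.e. the polynomial obtained from τ by the linear substitution s_j equals −τ) for every j = 1,…,m, then the product α_1⋯α_m divides τ in k[x_1,…,x_n]. -/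
open MvPolynomial

section Aux

variable {k : Type*} [Field k] {n : ℕ}

/-- The linear form with coefficient vector `a`. -/
noncomputable def lf (a : Fin n → k) : MvPolynomial (Fin n) k := ∑ i, C (a i) * X i

/-- Substitution killing the linear form `lf a`, assuming `a i₀ ≠ 0`. -/
noncomputable def lfSubst (a : Fin n → k) (i₀ : Fin n) :
    MvPolynomial (Fin n) k →ₐ[k] MvPolynomial (Fin n) k :=
  aeval (fun i => if i = i₀ then X i₀ - C (a i₀)⁻¹ * lf a else X i)

lemma lfSubst_X_ne (a : Fin n → k) {i₀ i : Fin n} (h : i ≠ i₀) :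
    lfSubst a i₀ (X i) = X i := by
  simp [lfSubst, h]

lemma lfSubst_X_self (a : Fin n → k) (i₀ : Fin n) :
    lfSubst a i₀ (X i₀) = X i₀ - C (a i₀)⁻¹ * lf a := by
  simp [lfSubst]

lemma lf_dvd_sub_lfSubst (a : Fin n → k) (i₀ : Fin n) (q : MvPolynomial (Fin n) k) :
    lf a ∣ q - lfSubst a i₀ q := by
  induction q using MvPolynomial.induction_on with
  | C c => simp [lfSubst]
  | add p q hp hq =>
      have := dvd_add hp hq
      rwa [show p - lfSubst a i₀ p + (q - lfSubst a i₀ q)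
        = p + q - lfSubst a i₀ (p + q) by rw [map_add]; ring] at this
  | mul_X p i hp =>
      rcases eq_or_ne i i₀ with rfl | hi
      · have : p * X i - lfSubst a i (p * X i)
            = (p - lfSubst a i p) * X i
              + lfSubst a i p * C (a i)⁻¹ * lf a := by
          rw [map_mul, lfSubst_X_self]; ring
        rw [this]
        exact dvd_add (hp.mul_right _) (dvd_mul_left _ _)
      · have : p * X i - lfSubst a i₀ (p * X i)
            = (p - lfSubst a i₀ p) * X i := by
          rw [map_mul, lfSubst_X_ne a hi]; ring
        rw [this]
        exact hp.mul_right _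
  
lemma lfSubst_lf' (a b : Fin n → k) (i₀ : Fin n) :
    lfSubst a i₀ (lf b) = lf b - C (b i₀ * (a i₀)⁻¹) * lf a := by
  classical
  rw [lf, map_sum]
  have h : ∀ i : Fin n,
      lfSubst a i₀ (C (b i) * X i)
        = C (b i) * X i - (if i = i₀ then C (b i₀ * (a i₀)⁻¹) * lf a else 0) := by
    intro i
    rcases eq_or_ne i i₀ with rfl | hi
    · rw [map_mul, lfSubst_X_self, if_pos rfl]
      simp only [C_mul, algHom_C, algebraMap_eq]
      ring
    · rw [map_mul, lfSubst_X_ne a hi, if_neg hi, algHom_C, algebraMap_eq, sub_zero]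
  rw [Finset.sum_congr rfl fun i _ => h i, Finset.sum_sub_distrib,
    Finset.sum_ite_eq' Finset.univ i₀, if_pos (Finset.mem_univ _), ← lf]

lemma lfSubst_lf (a : Fin n → k) {i₀ : Fin n} (h : a i₀ ≠ 0) :
    lfSubst a i₀ (lf a) = 0 := by
  rw [lfSubst_lf' a a i₀, mul_inv_cancel₀ h, C_1, one_mul, sub_self]

lemma lf_dvd_iff (a : Fin n → k) {i₀ : Fin n} (h : a i₀ ≠ 0)
    (q : MvPolynomial (Fin n) k) : lf a ∣ q ↔ lfSubst a i₀ q = 0 := by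
  constructor
  · rintro ⟨r, rfl⟩
    rw [map_mul, lfSubst_lf a h, zero_mul]
  · intro h0
    have := lf_dvd_sub_lfSubst a i₀ q
    rwa [h0, sub_zero] at this

lemma lf_coeff (a : Fin n → k) (i₁ : Fin n) :
    coeff (Finsupp.single i₁ 1) (lf a) = a i₁ := by
  classical
  have hterm : ∀ i ∈ Finset.univ, coeff (Finsupp.single i₁ 1) (C (a i) * X i)
      = if i = i₁ then a i else 0 := by
    intro i _
    rcases eq_or_ne i i₁ with rfl | hi
    · simp [coeff_C_mul]
    · rw [coeff_C_mul, coeff_X',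
        if_neg (fun hh => hi (Finsupp.single_left_inj one_ne_zero |>.mp hh)), if_neg hi, mul_zero]
  rw [lf, coeff_sum, Finset.sum_congr rfl hterm,
    Finset.sum_ite_eq' Finset.univ i₁ a, if_pos (Finset.mem_univ _)]

lemma lf_ne_zero (a : Fin n → k) {i₀ : Fin n} (h : a i₀ ≠ 0) : lf a ≠ 0 := by
  classical
  intro h0
  have : coeff (Finsupp.single i₀ 1) (lf a) = a i₀ := lf_coeff a i₀
  rw [h0, coeff_zero] at this
  exact h this.symm

lemma lf_prime (a : Fin n → k) {i₀ : Fin n} (h : a i₀ ≠ 0) : Prime (lf a) := by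
  refine ⟨lf_ne_zero a h, fun hu => ?_, fun p q hpq => ?_⟩
  · have : lfSubst a i₀ (1 : MvPolynomial (Fin n) k) = 0 :=
      (lf_dvd_iff a h 1).mp hu.dvd
    simp at this
  · rw [lf_dvd_iff a h, map_mul] at hpq
    rcases mul_eq_zero.mp hpq with h' | h'
    · exact Or.inl ((lf_dvd_iff a h p).mpr h')
    · exact Or.inr ((lf_dvd_iff a h q).mpr h')

lemma aeval_eq_eval' (v : Fin n → k) (p : MvPolynomial (Fin n) k) :
    aeval v p = eval v p := by
  rw [aeval_def, Algebra.algebraMap_self]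
  rfl

lemma lf_dvd_of_vanishing [Infinite k] (a : Fin n → k) {i₀ : Fin n} (h : a i₀ ≠ 0)
    (τ : MvPolynomial (Fin n) k)
    (hv : ∀ v : Fin n → k, (∑ i, a i * v i) = 0 → eval v τ = 0) : lf a ∣ τ := by
  classical
  rw [lf_dvd_iff a h]
  apply MvPolynomial.funext
  intro v
  rw [map_zero]
  set S : k := ∑ i, a i * v i with hS
  set w : Fin n → k := fun i => if i = i₀ then v i₀ - (a i₀)⁻¹ * S else v i with hwdef
  have hw : (fun i => aeval v
      ((fun i => if i = i₀ then X i₀ - C (a i₀)⁻¹ * lf a else X i) i)) = w := by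
    funext i
    rcases eq_or_ne i i₀ with rfl | hi
    · simp [lf, w, hS]
    · simp [hi, w]
  have hew : eval v (lfSubst a i₀ τ) = eval w τ := by
    rw [← aeval_eq_eval' v, lfSubst, comp_aeval_apply, hw, aeval_eq_eval']
  have hw0 : (∑ i, a i * w i) = 0 := by
    have hterm : ∀ i ∈ Finset.univ, a i * w i
        = a i * v i - (if i = i₀ then a i₀ * ((a i₀)⁻¹ * S) else 0) := by
      intro i _
      rcases eq_or_ne i i₀ with rfl | hi
      · simp only [w, if_pos rfl, eq_self_iff_true, if_true]
        ring
      · simp only [w, if_neg hi, sub_zero]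
    rw [Finset.sum_congr rfl hterm, Finset.sum_sub_distrib,
      Finset.sum_ite_eq' Finset.univ i₀, if_pos (Finset.mem_univ _),
      ← mul_assoc, mul_inv_cancel₀ h, one_mul, ← hS, sub_self]
  rw [hew]
  exact hv w hw0

lemma prod_primes_dvd' {R : Type*} [CommRing R] {ι : Type*} (p : ι → R) (τ : R)
    (hp : ∀ j, Prime (p j)) (hd : ∀ j, p j ∣ τ)
    (hnd : ∀ j j', j ≠ j' → ¬ p j ∣ p j')
    (t : Finset ι) : (∏ j ∈ t, p j) ∣ τ := by
  classical
  induction t using Finset.induction_on with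
  | empty => simp
  | @insert j t hj ih =>
      obtain ⟨c, rfl⟩ := ih
      rcases (hp j).2.2 _ _ (hd j) with hdvd | hdvd
      · exfalso
        obtain ⟨i, hi, hdi⟩ := ((hp j).dvd_finset_prod_iff _).mp hdvd
        exact hnd j i (fun hh => hj (hh ▸ hi)) hdi
      · obtain ⟨d, rfl⟩ := hdvd
        rw [Finset.prod_insert hj]
        exact ⟨d, by ring⟩

end Aux

/-- Anti-invariance forces divisibility by the product of the linear forms:
if `α_1,…,α_m` are nonzero, pairwise non-proportional linear forms on `k^n`
(with coefficient vectors `a j`), each `s_j : k^n → k^n` is a linear map fixing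
the hyperplane `ker α_j` pointwise, and `τ` is a polynomial with `τ ∘ s_j = -τ`
for every `j`, then `α_1 ⋯ α_m` divides `τ`. -/
theorem prod_linearForms_dvd_of_antiInvariant
    {k : Type*} [Field k] [CharZero k] {n m : ℕ}
    (a : Fin m → Fin n → k) (ha : ∀ j, a j ≠ 0)
    (hprop : ∀ j j', j ≠ j' → ∀ c : k, a j ≠ c • a j')
    (s : Fin m → ((Fin n → k) →ₗ[k] (Fin n → k)))
    (hs : ∀ j, ∀ v : Fin n → k, (∑ i, a j i * v i) = 0 → s j v = v)
    (τ : MvPolynomial (Fin n) k)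
    (hτ : ∀ j, aeval (fun i => ∑ i', C ((s j) (Pi.single i' (1 : k)) i) * X i') τ = -τ) :
    (∏ j, ∑ i, C (a j i) * X i) ∣ τ := by
  classical
  have hex : ∀ j, ∃ i, a j i ≠ 0 := fun j => Function.ne_iff.mp (ha j)
  choose i₀ hi₀ using hex
  -- τ vanishes on each hyperplane
  have hvan : ∀ j, ∀ v : Fin n → k, (∑ i, a j i * v i) = 0 → eval v τ = 0 := by
    intro j v hv0
    have hsv : s j v = v := hs j v hv0
    have hsum : (fun i => ∑ i', (s j) (Pi.single i' (1 : k)) i * v i') = v := by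
      funext i
      have h1 : s j v = ∑ i', v i' • (s j) (Pi.single i' (1 : k)) := by
        conv_lhs => rw [← Finset.univ_sum_single v]
        rw [map_sum]
        refine Finset.sum_congr rfl fun i' _ => ?_
        rw [show Pi.single i' (v i') = v i' • (Pi.single i' (1 : k) : Fin n → k) by
          rw [← Pi.single_smul, smul_eq_mul, mul_one], map_smul]
      calc (∑ i', (s j) (Pi.single i' (1 : k)) i * v i')
          = (∑ i', v i' • (s j) (Pi.single i' (1 : k))) i := by
            rw [Finset.sum_apply]
            exact Finset.sum_congr rfl fun i' _ => by
              rw [Pi.smul_apply, smul_eq_mul, mul_comm]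
        _ = s j v i := by rw [← h1]
        _ = v i := by rw [hsv]
    have hev := congrArg (eval v) (hτ j)
    rw [map_neg] at hev
    have hL : eval v (aeval (fun i => ∑ i', C ((s j) (Pi.single i' (1 : k)) i) * X i') τ)
        = eval v τ := by
      rw [← aeval_eq_eval' v, comp_aeval_apply]
      have : (fun i => aeval v (∑ i', C ((s j) (Pi.single i' (1 : k)) i) * X i')) = v := by
        funext i
        simp only [map_sum, map_mul, aeval_C, aeval_X, Algebra.algebraMap_self, RingHom.id_apply]
        exact congrFun hsum i
      rw [this, aeval_eq_eval']
    rw [hL] at hev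
    have h2 : (2 : k) * eval v τ = 0 := by
      linear_combination hev
    exact (mul_eq_zero.mp h2).resolve_left two_ne_zero
  have hd : ∀ j, lf (a j) ∣ τ := fun j => lf_dvd_of_vanishing (a j) (hi₀ j) τ (hvan j)
  have hprime : ∀ j, Prime (lf (a j)) := fun j => lf_prime (a j) (hi₀ j)
  have hnd : ∀ j j', j ≠ j' → ¬ lf (a j) ∣ lf (a j') := by
    intro j j' hne hdvd
    have h0 : lfSubst (a j) (i₀ j) (lf (a j')) = 0 :=
      (lf_dvd_iff (a j) (hi₀ j) _).mp hdvd
    rw [lfSubst_lf', sub_eq_zero] at h0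
    set c : k := a j' (i₀ j) * (a j (i₀ j))⁻¹ with hc
    have hcoeff : a j' = c • a j := by
      funext i
      have := congrArg (coeff (Finsupp.single i 1)) h0
      rwa [lf_coeff, coeff_C_mul, lf_coeff, ← smul_eq_mul, ← Pi.smul_apply c (a j) i] at this
    exact hprop j' j hne.symm c hcoeff
  exact prod_primes_dvd' (fun j => lf (a j)) τ hprime hd hnd Finset.univ
end

section
/- Let g be a finite-dimensional Lie algebra over a field of characteristic 0, and let (H, X, Y) be an sl₂-triple in g, i.e. [H,X] = 2X, [H,Y] = −2Y, [X,Y] = H, with X ≠ 0 and Y ≠ 0. Then g decomposes as the direct sum of vector subspaces g = [X, g] ⊕ g^Y, i.e. the range of ad X and the kernel of ad Y are complementary linear subspaces of g. -/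
open LinearMap Module

namespace Sl2Aux

variable {𝕜 : Type*} [Field 𝕜] [CharZero 𝕜]
variable {V : Type*} [AddCommGroup V] [Module 𝕜 V] [FiniteDimensional 𝕜 V]
variable (E F Hop : Module.End 𝕜 V)

/-- Commutation of `Hop` with powers of `E`, pointwise. -/
lemma hop_pow (hHE : ∀ v, Hop (E v) - E (Hop v) = (2 : 𝕜) • E v) (m : ℕ) (v : V) :
    Hop ((E ^ m) v) = (E ^ m) (Hop v) + ((2 : 𝕜) * m) • (E ^ m) v := by
  induction m generalizing v with
  | zero => simp
  | succ m ih =>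
    have h1 : ∀ w, (E ^ (m + 1)) w = (E ^ m) (E w) := fun w => by
      rw [pow_succ]; rfl
    rw [h1 v, ih (E v)]
    have h2 := hHE v
    rw [sub_eq_iff_eq_add] at h2
    rw [h2, map_add, map_smul, h1 (Hop v)]
    push_cast
    module


/-- Commutation of `F` with powers of `E`, pointwise. -/
lemma f_pow (hEF : ∀ v, E (F v) - F (E v) = Hop v)
    (hHE : ∀ v, Hop (E v) - E (Hop v) = (2 : 𝕜) • E v) (m : ℕ) (v : V) :
    F ((E ^ (m + 1)) v) = (E ^ (m + 1)) (F v) - ((m : 𝕜) + 1) • (E ^ m) (Hop v)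
      - ((m : 𝕜) * ((m : 𝕜) + 1)) • (E ^ m) v := by
  induction m generalizing v with
  | zero =>
    have h2 : F (E v) = E (F v) - Hop v := by rw [← hEF v]; abel
    simpa using h2
  | succ m ih =>
    have h2 : F (E v) = E (F v) - Hop v := by rw [← hEF v]; abel
    have h3 : Hop (E v) = (2:𝕜) • E v + E (Hop v) := by rw [← hHE v]; abel
    have ihE := ih (E v)
    simp only [pow_succ, Module.End.mul_apply] at ihE ⊢
    rw [ihE, h2, h3]
    simp only [map_sub, map_add, map_smul]
    push_cast
    module

/-- `E` is nilpotent: trace argument on the stable range. -/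
lemma exists_pow_eq_zero (hHE : ∀ v, Hop (E v) - E (Hop v) = (2 : 𝕜) • E v) :
    ∃ n : ℕ, E ^ n = 0 := by
  -- the ranges of powers of `E` form a decreasing chain which must stabilise
  have hmono : ∀ n : ℕ, LinearMap.range (E ^ (n + 1)) ≤ LinearMap.range (E ^ n) := by
    rintro n x ⟨u, rfl⟩
    exact ⟨E u, by rw [pow_succ]; rfl⟩
  obtain ⟨n, hn⟩ : ∃ n : ℕ, LinearMap.range (E ^ (n + 1)) = LinearMap.range (E ^ n) := by
    by_contra hcon
    push_neg at hcon
    have hlt : ∀ n : ℕ, finrank 𝕜 (LinearMap.range (E ^ (n + 1)))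
        < finrank 𝕜 (LinearMap.range (E ^ n)) := by
      intro n
      refine lt_of_le_of_ne (Submodule.finrank_mono (hmono n)) fun h => hcon n ?_
      exact Submodule.eq_of_le_of_finrank_le (hmono n) h.ge
    have key : ∀ n : ℕ, finrank 𝕜 (LinearMap.range (E ^ n)) + n
        ≤ finrank 𝕜 (LinearMap.range (E ^ 0)) := by
      intro n
      induction n with
      | zero => simp
      | succ n ih => have := hlt n; omega
    have := key (finrank 𝕜 (LinearMap.range (E ^ 0)) + 1)
    omega
  refine ⟨n, ?_⟩
  set W : Submodule 𝕜 V := LinearMap.range (E ^ n) with hW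
  -- E and Hop preserve W
  have hmapE : ∀ x ∈ W, E x ∈ W := by
    rintro x ⟨u, rfl⟩
    rw [← hn]
    exact ⟨u, by rw [pow_succ']; rfl⟩
  have hmapH : ∀ x ∈ W, Hop x ∈ W := by
    rintro x ⟨u, rfl⟩
    rw [hop_pow E Hop hHE n u]
    exact W.add_mem ⟨Hop u, rfl⟩ (W.smul_mem _ ⟨u, rfl⟩)
  set e' : W →ₗ[𝕜] W := E.restrict hmapE with he'
  set h' : W →ₗ[𝕜] W := Hop.restrict hmapH with hh'
  -- e' is surjective, hence bijective
  have hsurj : Function.Surjective e' := by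
    rintro ⟨w, hw⟩
    rw [← hn] at hw
    obtain ⟨u, rfl⟩ := hw
    refine ⟨⟨(E ^ n) u, ⟨u, rfl⟩⟩, ?_⟩
    apply Subtype.ext
    rw [LinearMap.restrict_coe_apply]
    show E ((E ^ n) u) = (E ^ (n + 1)) u
    rw [pow_succ']
    rfl
  have hinj : Function.Injective e' := LinearMap.injective_iff_surjective.mpr hsurj
  -- the commutation relation for the restrictions
  have hrel : h' * e' - e' * h' = (2 : 𝕜) • e' := by
    ext x
    simpa only [LinearMap.sub_apply, Module.End.mul_apply, LinearMap.smul_apply,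
      Submodule.coe_sub, SetLike.val_smul, LinearMap.restrict_coe_apply, e', h'] using hHE (x : V)
  -- invert e'
  let ε : W ≃ₗ[𝕜] W := LinearEquiv.ofBijective e' ⟨hinj, hsurj⟩
  have hεe : ∀ x : W, ε x = e' x := fun x => rfl
  have h1 : e' * ε.symm.toLinearMap = 1 := by
    ext x
    have hx : e' (ε.symm x) = x := ε.apply_symm_apply x
    simpa only [Module.End.mul_apply, Module.End.one_apply, LinearEquiv.coe_coe] using
      congrArg Subtype.val hx
  have h2 : ε.symm.toLinearMap * e' = 1 := by
    ext x
    have hx : ε.symm (e' x) = x := ε.symm_apply_apply x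
    simpa only [Module.End.mul_apply, Module.End.one_apply, LinearEquiv.coe_coe] using
      congrArg Subtype.val hx
  -- trace computation
  have htr : LinearMap.trace 𝕜 W ((h' * e' - e' * h') * ε.symm.toLinearMap)
      = LinearMap.trace 𝕜 W ((2 : 𝕜) • (1 : Module.End 𝕜 W)) := by
    rw [hrel, smul_mul_assoc, h1]
  have hzero : (0 : 𝕜) = 2 * finrank 𝕜 W := by
    have lhs : LinearMap.trace 𝕜 W ((h' * e' - e' * h') * ε.symm.toLinearMap) = 0 := by
      rw [sub_mul, map_sub, mul_assoc, h1, mul_one, mul_assoc, LinearMap.trace_mul_comm,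
        mul_assoc, h2, mul_one, sub_self]
    rw [lhs] at htr
    rw [map_smul, LinearMap.trace_one] at htr
    simpa [smul_eq_mul] using htr
  have hfr : finrank 𝕜 W = 0 := by
    have h2ne : (2 : 𝕜) ≠ 0 := two_ne_zero
    have := mul_eq_zero.mp hzero.symm
    rcases this with h | h
    · exact absurd h h2ne
    · exact_mod_cast h
  have : W = ⊥ := Submodule.finrank_eq_zero.mp hfr
  rw [← LinearMap.range_eq_bot, ← hW]
  exact this

/-- An eigenvector of `Hop` with non-positive integer eigenvalue lying in
`ker F ∩ range E` must vanish. -/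
lemma bootstrap (hEF : ∀ v, E (F v) - F (E v) = Hop v)
    (hHE : ∀ v, Hop (E v) - E (Hop v) = (2 : 𝕜) • E v)
    {n : ℕ} (hn : E ^ n = 0) (nn : ℕ) (v : V)
    (hF : F v = 0) (heig : Hop v = -((nn : 𝕜)) • v) (hv : v ∈ LinearMap.range E) :
    v = 0 := by
  have claim : ∀ j : ℕ, v ∈ LinearMap.range (E ^ (j + 1)) := by
    intro j
    induction j with
    | zero => simpa using hv
    | succ j ih =>
      obtain ⟨z, hz⟩ := ih
      have h1 := hop_pow E Hop hHE (j + 1) z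
      push_cast at h1
      rw [hz, heig] at h1
      have hd : (E ^ (j + 1)) (Hop z + ((nn : 𝕜) + 2 * ((j : 𝕜) + 1)) • z) = 0 := by
        rw [map_add, map_smul, hz]
        linear_combination (norm := module) -h1
      have h2 := f_pow E F Hop hEF hHE j z
      rw [hz, hF] at h2
      have hcj : (E ^ j) (E (F z) - ((j : 𝕜) + 1) • Hop z - ((j : 𝕜) * ((j : 𝕜) + 1)) • z)
          = 0 := by
        have hEj : (E ^ (j + 1)) (F z) = (E ^ j) (E (F z)) := by rw [pow_succ]; rfl
        rw [hEj] at h2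
        rw [map_sub, map_sub, map_smul, map_smul]
        linear_combination (norm := module) -h2
      have hc : (E ^ (j + 1)) (E (F z) - ((j : 𝕜) + 1) • Hop z - ((j : 𝕜) * ((j : 𝕜) + 1)) • z)
          = 0 := by
        rw [pow_succ', Module.End.mul_apply, hcj, map_zero]
      have key : ((j : 𝕜) + 1) • (Hop z + ((nn : 𝕜) + 2 * ((j : 𝕜) + 1)) • z)
            + (E (F z) - ((j : 𝕜) + 1) • Hop z - ((j : 𝕜) * ((j : 𝕜) + 1)) • z)
          = (((j : 𝕜) + 1) * ((nn : 𝕜) + (j : 𝕜) + 2)) • z + E (F z) := by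
        module
      have happ : (E ^ (j + 1)) (((j : 𝕜) + 1) • (Hop z + ((nn : 𝕜) + 2 * ((j : 𝕜) + 1)) • z)
            + (E (F z) - ((j : 𝕜) + 1) • Hop z - ((j : 𝕜) * ((j : 𝕜) + 1)) • z)) = 0 := by
        rw [map_add, map_smul, hd, hc, smul_zero, add_zero]
      rw [key, map_add, map_smul, hz] at happ
      have hEj2 : (E ^ (j + 1)) (E (F z)) = (E ^ (j + 1 + 1)) (F z) := by rw [pow_succ]; rfl
      rw [hEj2] at happ
      -- happ : c • v + (E ^ (j+2)) (F z) = 0 with c ≠ 0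
      have ha : ((j : 𝕜) + 1) ≠ 0 := Nat.cast_add_one_ne_zero j
      have hb : ((nn : 𝕜) + (j : 𝕜) + 2) ≠ 0 := by
        have h0 : (((nn + j + 2 : ℕ)) : 𝕜) ≠ 0 := Nat.cast_ne_zero.mpr (by omega)
        push_cast at h0
        exact h0
      have hne : (((j : 𝕜) + 1) * ((nn : 𝕜) + (j : 𝕜) + 2)) ≠ 0 := mul_ne_zero ha hb
      refine ⟨(-((((j : 𝕜) + 1) * ((nn : 𝕜) + (j : 𝕜) + 2))⁻¹)) • F z, ?_⟩
      rw [map_smul]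
      have hv' : (E ^ (j + 1 + 1)) (F z)
          = -((((j : 𝕜) + 1) * ((nn : 𝕜) + (j : 𝕜) + 2)) • v) := by
        linear_combination (norm := module) happ
      rw [hv', smul_neg, neg_smul, neg_neg, smul_smul, inv_mul_cancel₀ hne, one_smul]
  have hv0 := claim n
  have hE0 : E ^ (n + 1) = 0 := by rw [pow_succ, hn, zero_mul]
  rw [hE0] at hv0
  obtain ⟨u, hu⟩ := hv0
  simpa using hu.symm

/-- Key lemma: for an `sl₂`-like triple of endomorphisms of a finite-dimensional
space in characteristic zero, `range E` and `ker F` are disjoint. -/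
lemma disjoint_range_ker
    (hEF : ∀ v, E (F v) - F (E v) = Hop v)
    (hHE : ∀ v, Hop (E v) - E (Hop v) = (2 : 𝕜) • E v)
    (hHF : ∀ v, Hop (F v) - F (Hop v) = -((2 : 𝕜) • F v)) :
    Disjoint (LinearMap.range E) (LinearMap.ker F) := by
  obtain ⟨n, hn⟩ := exists_pow_eq_zero E Hop hHE
  have main : ∀ p : ℕ, ∀ v : V, F v = 0 → (E ^ p) v = 0 → v ∈ LinearMap.range E → v = 0 := by
    intro p
    induction p with
    | zero => intro v _ h0 _; simpa using h0
    | succ p ih =>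
      intro v hFv hEv hvr
      have h2 := f_pow E F Hop hEF hHE p v
      rw [hEv, hFv, map_zero, map_zero] at h2
      -- h2 : 0 = 0 - (p+1) • E^p (Hop v) - (p(p+1)) • E^p v
      have hu : (E ^ p) (Hop v + (p : 𝕜) • v) = 0 := by
        rw [map_add, map_smul]
        have h3 : ((p : 𝕜) + 1) • ((E ^ p) (Hop v) + (p : 𝕜) • (E ^ p) v) = 0 := by
          linear_combination (norm := module) h2
        exact (smul_eq_zero.mp h3).resolve_left (Nat.cast_add_one_ne_zero p)
      have hFu : F (Hop v + (p : 𝕜) • v) = 0 := by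
        have h4 := hHF v
        rw [hFv, map_zero, smul_zero, neg_zero, zero_sub, neg_eq_zero] at h4
        rw [map_add, map_smul, hFv, smul_zero, add_zero, h4]
      have hru : Hop v + (p : 𝕜) • v ∈ LinearMap.range E := by
        obtain ⟨a, rfl⟩ := hvr
        refine ⟨Hop a + (2 : 𝕜) • a + (p : 𝕜) • a, ?_⟩
        rw [map_add, map_add, map_smul, map_smul]
        linear_combination (norm := module) -(hHE a)
      have hu0 : Hop v + (p : 𝕜) • v = 0 := ih _ hFu hu hru
      have heig : Hop v = -((p : 𝕜)) • v := by
        linear_combination (norm := module) hu0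
      exact bootstrap E F Hop hEF hHE hn p v hFv heig hvr
  refine Submodule.disjoint_def.mpr fun v hvr hvk => ?_
  exact main n v (LinearMap.mem_ker.mp hvk) (by rw [hn]; rfl) hvr

end Sl2Aux



/-- For an `sl₂`-triple `(H, X, Y)` in a finite-dimensional Lie algebra `g` over
a field of characteristic `0`, the range of `ad X` and the kernel of `ad Y`
(i.e. the centralizer `g^Y`) are complementary linear subspaces:
`g = [X, g] ⊕ g^Y`. -/
theorem isCompl_range_adX_ker_adY
    {k : Type*} [Field k] [CharZero k]
    {g : Type*} [LieRing g] [LieAlgebra k g] [FiniteDimensional k g]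
    (H X Y : g)
    (hHX : ⁅H, X⁆ = (2 : k) • X) (hHY : ⁅H, Y⁆ = (-2 : k) • Y) (hXY : ⁅X, Y⁆ = H)
    (hX : X ≠ 0) (hY : Y ≠ 0) :
    IsCompl (LinearMap.range (LieAlgebra.ad k g X))
      (LinearMap.ker (LieAlgebra.ad k g Y)) := by
  set E := LieAlgebra.ad k g X with hE
  set F := LieAlgebra.ad k g Y with hF
  set Hop := LieAlgebra.ad k g H with hHop
  have hEapp : ∀ v : g, E v = ⁅X, v⁆ := fun v => rfl
  have hFapp : ∀ v : g, F v = ⁅Y, v⁆ := fun v => rfl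
  have hHapp : ∀ v : g, Hop v = ⁅H, v⁆ := fun v => rfl
  have hEF : ∀ v : g, E (F v) - F (E v) = Hop v := by
    intro v
    simp only [hEapp, hFapp, hHapp]
    rw [← hXY, lie_lie]
  have hHE : ∀ v : g, Hop (E v) - E (Hop v) = (2 : k) • E v := by
    intro v
    simp only [hEapp, hFapp, hHapp]
    rw [← lie_lie, hHX, smul_lie]
  have hHF : ∀ v : g, Hop (F v) - F (Hop v) = -((2 : k) • F v) := by
    intro v
    simp only [hEapp, hFapp, hHapp]
    rw [← lie_lie, hHY, smul_lie, ← neg_smul]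
  have disj1 : Disjoint (LinearMap.range E) (LinearMap.ker F) :=
    Sl2Aux.disjoint_range_ker E F Hop hEF hHE hHF
  have hEF' : ∀ v : g, F (E v) - E (F v) = (-Hop) v := by
    intro v
    rw [LinearMap.neg_apply]
    linear_combination (norm := module) -(hEF v)
  have hHE' : ∀ v : g, (-Hop) (F v) - F ((-Hop) v) = (2 : k) • F v := by
    intro v
    rw [LinearMap.neg_apply, LinearMap.neg_apply, map_neg]
    linear_combination (norm := module) -(hHF v)
  have hHF' : ∀ v : g, (-Hop) (E v) - E ((-Hop) v) = -((2 : k) • E v) := by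
    intro v
    rw [LinearMap.neg_apply, LinearMap.neg_apply, map_neg]
    linear_combination (norm := module) -(hHE v)
  have disj2 : Disjoint (LinearMap.range F) (LinearMap.ker E) :=
    Sl2Aux.disjoint_range_ker F E (-Hop) hEF' hHE' hHF'
  -- dimension count
  have h1 := LinearMap.finrank_range_add_finrank_ker E
  have h2 := LinearMap.finrank_range_add_finrank_ker F
  have hsum2 : Module.finrank k ↥(LinearMap.range F ⊔ LinearMap.ker E)
      = Module.finrank k ↥(LinearMap.range F) + Module.finrank k ↥(LinearMap.ker E) := by
    have := Submodule.finrank_sup_add_finrank_inf_eq (LinearMap.range F) (LinearMap.ker E)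
    rw [disjoint_iff.mp disj2, finrank_bot, add_zero] at this
    exact this
  have hle2 : Module.finrank k ↥(LinearMap.range F ⊔ LinearMap.ker E) ≤ Module.finrank k g :=
    Submodule.finrank_le _
  have hkk : Module.finrank k ↥(LinearMap.ker E) ≤ Module.finrank k ↥(LinearMap.ker F) := by
    omega
  have hsum1 : Module.finrank k ↥(LinearMap.range E ⊔ LinearMap.ker F)
      = Module.finrank k ↥(LinearMap.range E) + Module.finrank k ↥(LinearMap.ker F) := by
    have := Submodule.finrank_sup_add_finrank_inf_eq (LinearMap.range E) (LinearMap.ker F)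
    rw [disjoint_iff.mp disj1, finrank_bot, add_zero] at this
    exact this
  have hle1 : Module.finrank k ↥(LinearMap.range E ⊔ LinearMap.ker F) ≤ Module.finrank k g :=
    Submodule.finrank_le _
  have htop : LinearMap.range E ⊔ LinearMap.ker F = ⊤ := by
    apply Submodule.eq_top_of_finrank_eq
    omega
  exact ⟨disj1, codisjoint_iff.mpr htop⟩
end
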